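/- Let g ∈ ℝⁿ be defined by g_i = n^{−a} for i < n^a and g_i = i^{(ω−2)/(1−a) − 1} · n^{−a(ω−2)/(1−a)} for i ≥ n^a, where 2 ≤ ω ≤ 3 and 0 < a < 1. Then (Σ_{i=1}^n g_i²)^{1/2} ≤ C·√(log n)·(n^{−a/2} + n^{ω−5/2}) for a universal constant C. -/

import Mathlib

/-!
Writing `β = (ω - 2)/(1 - a)`, every weight satisfies `g_i² ≤ i⁻¹ (n^{-a} + n^{2ω-5})`: below
`n^a` because `n^{-a} ≤ i⁻¹` there, and above `n^a` because `g_i² = i⁻¹ · i^{2β-1} n^{-2aβ}` and the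
monotone function `i ↦ i^{2β-1}` on `[n^a, n]` is largest at an endpoint, where
`i^{2β-1} n^{-2aβ}` equals `n^{-a}` resp. `n^{2ω-5}`. Summing against the harmonic bound
`Σ 1/i ≤ 1 + log n ≤ 4 log n` and taking square roots, with `n^{-a} + n^{2ω-5} ≤ (n^{-a/2} + n^{ω-5/2})²`,
gives the claim with `C = 2`.
-/

open Real Finset

/-- The weight sequence used in the projection-maintenance potential:
`g_i = n^{-a}` for `i < n^a` and `g_i = i^{(ω−2)/(1−a)−1} n^{−a(ω−2)/(1−a)}` otherwise. -/
noncomputable def gweight (n : ℕ) (a ω : ℝ) (i : ℕ) : ℝ :=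
  if (i : ℝ) < (n : ℝ) ^ a then (n : ℝ) ^ (-a)
  else (i : ℝ) ^ ((ω - 2) / (1 - a) - 1) * (n : ℝ) ^ (-(a * (ω - 2) / (1 - a)))

lemma sum_Icc_inv_le_one_add_log (n : ℕ) : ∑ i ∈ Icc 1 n, (i : ℝ)⁻¹ ≤ 1 + log n := by
  simpa [harmonic_eq_sum_Icc] using harmonic_le_one_add_log n

lemma Real.rpow_le_max_of_mem_Icc {l x h : ℝ} (p : ℝ) (hl : 0 < l) (hlx : l ≤ x) (hxh : x ≤ h) :
    x ^ p ≤ max (l ^ p) (h ^ p) := by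
  rcases le_total p 0 with hp | hp
  · exact le_max_of_le_left (rpow_le_rpow_of_nonpos hl hlx hp)
  · exact le_max_of_le_right (rpow_le_rpow (hl.le.trans hlx) hxh hp)

lemma Real.rpow_div_two_sq {x : ℝ} (hx : 0 ≤ x) (p : ℝ) : (x ^ (p / 2)) ^ 2 = x ^ p := by
  rw [← rpow_natCast, ← rpow_mul hx]
  norm_num

lemma Real.rpow_add_rpow_le_sq {x : ℝ} (hx : 0 ≤ x) (p q : ℝ) :
    x ^ p + x ^ q ≤ (x ^ (p / 2) + x ^ (q / 2)) ^ 2 := by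
  nlinarith [rpow_div_two_sq hx p, rpow_div_two_sq hx q, rpow_nonneg hx (p / 2),
    rpow_nonneg hx (q / 2)]

lemma Real.rpow_sub_one_mul_sq {x : ℝ} (hx : 0 < x) (p y : ℝ) :
    (x ^ (p - 1) * y) ^ 2 = x⁻¹ * (x ^ (2 * p - 1) * y ^ 2) := by
  have h : x ^ (2 * p - 1) = x * (x ^ (p - 1)) ^ 2 := by
    rw [show 2 * p - 1 = 1 + (p - 1) * (2 : ℕ) by push_cast; ring, rpow_add hx, rpow_one,
      rpow_mul hx.le, rpow_natCast]
  rw [h]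
  field_simp

section gweight

variable {n : ℕ} {a ω : ℝ} {i : ℕ}

lemma gweight_sq_le_of_lt (hi : 0 < i) (hia : (i : ℝ) < n ^ a) :
    gweight n a ω i ^ 2 ≤ (i : ℝ)⁻¹ * n ^ (-a) := by
  have hn : (0 : ℝ) ≤ n := n.cast_nonneg
  have head : (n : ℝ) ^ (-a) ≤ (i : ℝ)⁻¹ := by
    rw [rpow_neg hn]
    exact inv_anti₀ (by exact_mod_cast hi) hia.le
  rw [gweight, if_pos hia, sq]
  exact mul_le_mul_of_nonneg_right head (rpow_nonneg hn _)

lemma gweight_sq_eq_of_le (hi : 0 < i) (hia : (n : ℝ) ^ a ≤ i) :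
    gweight n a ω i ^ 2 = (i : ℝ)⁻¹ *
      ((i : ℝ) ^ (2 * ((ω - 2) / (1 - a)) - 1) * (n : ℝ) ^ (-(2 * (a * ((ω - 2) / (1 - a)))))) := by
  rw [gweight, if_neg hia.not_gt, rpow_sub_one_mul_sq (by exact_mod_cast hi), ← rpow_natCast,
    ← rpow_mul n.cast_nonneg]
  ring_nf

lemma gweight_sq_le_of_le (ha : a ≠ 1) (hi : 0 < i) (hia : (n : ℝ) ^ a ≤ i) (hin : i ≤ n) :
    gweight n a ω i ^ 2 ≤ (i : ℝ)⁻¹ * max ((n : ℝ) ^ (-a)) ((n : ℝ) ^ (2 * ω - 5)) := by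
  have hn : (0 : ℝ) < n := by exact_mod_cast hi.trans_le hin
  set β := (ω - 2) / (1 - a)
  have hβa : β * (1 - a) = ω - 2 := div_mul_cancel₀ _ (sub_ne_zero.mpr ha.symm)
  have tail := rpow_le_max_of_mem_Icc (2 * β - 1) (rpow_pos_of_pos hn a) hia
    (by exact_mod_cast hin : (i : ℝ) ≤ n)
  have at_lower : ((n : ℝ) ^ a) ^ (2 * β - 1) * (n : ℝ) ^ (-(2 * (a * β))) = (n : ℝ) ^ (-a) := by
    rw [← rpow_mul hn.le, ← rpow_add hn]
    ring_nf
  have at_upper : (n : ℝ) ^ (2 * β - 1) * (n : ℝ) ^ (-(2 * (a * β))) = (n : ℝ) ^ (2 * ω - 5) := by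
    rw [← rpow_add hn]
    congr 1
    linear_combination 2 * hβa
  rw [gweight_sq_eq_of_le hi hia, ← at_lower, ← at_upper, ← max_mul_of_nonneg _ _ (by positivity)]
  gcongr

lemma gweight_sq_le (ha : a ≠ 1) (hi : 1 ≤ i) (hin : i ≤ n) :
    gweight n a ω i ^ 2 ≤ (i : ℝ)⁻¹ * ((n : ℝ) ^ (-a) + (n : ℝ) ^ (2 * ω - 5)) := by
  have hA : (0 : ℝ) ≤ (n : ℝ) ^ (-a) := rpow_nonneg n.cast_nonneg _
  have hB : (0 : ℝ) ≤ (n : ℝ) ^ (2 * ω - 5) := rpow_nonneg n.cast_nonneg _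
  rcases lt_or_ge (i : ℝ) ((n : ℝ) ^ a) with hia | hia
  · refine (gweight_sq_le_of_lt hi hia).trans ?_
    gcongr
    linarith
  · refine (gweight_sq_le_of_le ha hi hia hin).trans ?_
    gcongr
    exact max_le_add_of_nonneg hA hB

lemma sum_gweight_sq_le (ha : a ≠ 1) :
    ∑ i ∈ Icc 1 n, gweight n a ω i ^ 2 ≤
      (1 + log n) * ((n : ℝ) ^ (-a) + (n : ℝ) ^ (2 * ω - 5)) :=
  calc ∑ i ∈ Icc 1 n, gweight n a ω i ^ 2
      ≤ ∑ i ∈ Icc 1 n, (i : ℝ)⁻¹ * ((n : ℝ) ^ (-a) + (n : ℝ) ^ (2 * ω - 5)) :=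
        sum_le_sum fun i hi => gweight_sq_le ha (mem_Icc.mp hi).1 (mem_Icc.mp hi).2
    _ = (∑ i ∈ Icc 1 n, (i : ℝ)⁻¹) * ((n : ℝ) ^ (-a) + (n : ℝ) ^ (2 * ω - 5)) :=
        (sum_mul ..).symm
    _ ≤ _ := by
        gcongr
        exact sum_Icc_inv_le_one_add_log n

end gweight

/-- `(Σ_{i=1}^n g_i²)^{1/2} ≤ C √(log n) (n^{−a/2} + n^{ω−5/2})` for a universal constant. -/
theorem gweight_l2_bound :
    ∃ C : ℝ, 0 < C ∧ ∀ (n : ℕ) (a ω : ℝ), 2 ≤ n → 0 < a → a < 1 → 2 ≤ ω → ω ≤ 3 →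
      Real.sqrt (∑ i ∈ Finset.Icc 1 n, (gweight n a ω i) ^ 2) ≤
        C * Real.sqrt (Real.log n) * ((n : ℝ) ^ (-a / 2) + (n : ℝ) ^ (ω - 5 / 2)) := by
  refine ⟨2, two_pos, fun n a ω hn _ ha _ _ => ?_⟩
  have hn2 : (2 : ℝ) ≤ n := by exact_mod_cast hn
  have hlog0 : 0 ≤ log n := log_nonneg (by linarith)
  have hlog : 1 + log n ≤ 4 * log n := by
    linarith [log_two_gt_d9, log_le_log two_pos hn2]
  have hsplit := rpow_add_rpow_le_sq (n.cast_nonneg : (0 : ℝ) ≤ n) (-a) (2 * ω - 5)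
  rw [show (2 * ω - 5) / 2 = ω - 5 / 2 by ring] at hsplit
  have hsum : ∑ i ∈ Icc 1 n, gweight n a ω i ^ 2 ≤
      4 * log n * ((n : ℝ) ^ (-a / 2) + (n : ℝ) ^ (ω - 5 / 2)) ^ 2 :=
    (sum_gweight_sq_le ha.ne).trans (mul_le_mul hlog hsplit (by positivity) (by positivity))
  rw [sqrt_le_left (by positivity), mul_pow, mul_pow, sq_sqrt hlog0]
  linarith
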